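/- arXiv:2201.08593 — 2 statements merged into one kernel-verified Lean document; each statement's English description precedes it below -/
import Mathlib

section
/- Let $\mathbb{H}^2$ be the hyperbolic plane and let $\alpha_1, \alpha_2, \beta$ be points of the ideal boundary $\partial\mathbb{H}^2$ with $\alpha_1 \neq \beta$ and $\alpha_2 \neq \beta$. For $i=1,2$, let $\pi_{\alpha_i,\beta}$ denote the orthogonal (nearest-point) projection onto the complete geodesic with endpoints $\alpha_i$ and $\beta$. Then $d(\pi_{\alpha_2,\beta}(y), \pi_{\alpha_1,\beta}(y)) \to 0$ as $y \in \mathbb{H}^2$ tends to $\beta$. -/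
open Filter Topology Set OnePoint

noncomputable section

/-- The hyperbolic plane, modelled by the Poincaré upper half-plane with its
hyperbolic metric (from Mathlib). -/
abbrev Hyp := UpperHalfPlane

/-- The ideal boundary `∂ℍ² = ℝ ∪ {∞}`. -/
abbrev Bdry := OnePoint ℝ

/-- Inclusion of `ℍ²` into the Riemann sphere; the closed-disk compactification
`\overline{ℍ²}` is the closure of the image, and convergence to ideal points is
phrased via this inclusion. -/
def toSphere (z : Hyp) : OnePoint ℂ := ((z : ℂ) : OnePoint ℂ)

/-- Inclusion of the ideal boundary into the Riemann sphere. -/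
def bdryToSphere : Bdry → OnePoint ℂ := OnePoint.map (fun r : ℝ => (r : ℂ))

/-- A geodesic line: an isometric embedding of `ℝ`. -/
def IsGeodesicLine (c : ℝ → Hyp) : Prop := ∀ s t : ℝ, dist (c s) (c t) = |s - t|

/-- `c` has ideal endpoints `a` (backward) and `b` (forward). -/
def JoinsBdry (c : ℝ → Hyp) (a b : Bdry) : Prop :=
  Tendsto (fun t => toSphere (c t)) atBot (𝓝 (bdryToSphere a)) ∧
  Tendsto (fun t => toSphere (c t)) atTop (𝓝 (bdryToSphere b))

/-- The complete geodesic of `ℍ²` with ideal endpoints `a` and `b`. -/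
def idealGeodesic (a b : Bdry) : Set Hyp :=
  {z | ∃ c : ℝ → Hyp, IsGeodesicLine c ∧ JoinsBdry c a b ∧ z ∈ Set.range c}

/-- `π` is the nearest-point (orthogonal) projection onto the geodesic `(a,b)`. -/
def IsNearestProj (a b : Bdry) (π : Hyp → Hyp) : Prop :=
  ∀ y, π y ∈ idealGeodesic a b ∧ ∀ z ∈ idealGeodesic a b, dist y (π y) ≤ dist y z

/-- The filter of points of `ℍ²` tending to the ideal point `b` in the
closed-disk compactification. -/
def tendsToBdry (b : Bdry) : Filter Hyp := comap toSphere (𝓝 (bdryToSphere b))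

/-!
Conjugating by an element of `SL(2, ℝ)`, which acts on `ℍ` by isometries and extends continuously
to the boundary, we may assume `β = ∞`. A geodesic line `c` whose forward end is `∞` is vertical:
the Busemann function of `∞` satisfies `exp (d(z, q) / 2) * √(Im q) / |q| → 1 / √(Im z)` as
`q → ∞`, and evaluating it along `c` gives `Im c(t) = Im c(0) * exp t`, after which the distance
formula forces `Re c` to be constant. Hence the geodesic `(x, ∞)` is the line `Re z = x`, the
nearest point on it to `y` is `x + i |y - x|`, and for two such lines these points lie at
Euclidean distance at most `2 |x₁ - x₂|` and at height about `|y|`, so their hyperbolic distance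
tends to `0`.
-/

open Matrix Matrix.SpecialLinearGroup Bornology
open scoped MatrixGroups

lemma Matrix.SpecialLinearGroup.fin_two_det_eq_one {R : Type*} [CommRing R] (g : SL(2, R)) :
    g 0 0 * g 1 1 - g 0 1 * g 1 0 = 1 := by
  have := g.det_coe
  rwa [det_fin_two] at this

lemma OnePoint.mapGL_smul_infty {K : Type*} [Field K] [DecidableEq K] (g : SL(2, K)) :
    mapGL K g • (∞ : OnePoint K) = if g 1 0 = 0 then ∞ else ↑(g 0 0 / g 1 0) := by
  simp [OnePoint.smul_infty_eq_ite]

lemma OnePoint.mapGL_smul_coe {K : Type*} [Field K] [DecidableEq K] (g : SL(2, K)) (r : K) :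
    mapGL K g • (r : OnePoint K) =
      if g 1 0 * r + g 1 1 = 0 then ∞ else ↑((g 0 0 * r + g 0 1) / (g 1 0 * r + g 1 1)) := by
  simp [OnePoint.smul_some_eq_ite]

lemma tendsto_norm_sub_div_norm_cobounded {𝕜 : Type*} [NormedField 𝕜] (a : 𝕜) :
    Tendsto (fun q : 𝕜 => ‖q - a‖ / ‖q‖) (cobounded 𝕜) (𝓝 1) := by
  have h : Tendsto (fun q : 𝕜 => ‖1 - a * q⁻¹‖) (cobounded 𝕜) (𝓝 1) := by
    simpa using ((tendsto_const_nhds (x := (1 : 𝕜))).sub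
      (tendsto_inv₀_cobounded.const_mul a)).norm
  refine h.congr' ?_
  filter_upwards [eventually_ne_cobounded 0] with q hq
  rw [← norm_div, sub_div, div_self hq, div_eq_mul_inv]

lemma tendsToBdry_infty : tendsToBdry ∞ = comap ((↑) : Hyp → ℂ) (cobounded ℂ) := by
  rw [Metric.cobounded_eq_cocompact, ← coclosedCompact_eq_cocompact,
    ← OnePoint.comap_coe_nhds_infty, comap_comap]
  rfl

lemma tendsToBdry_coe (r : ℝ) : tendsToBdry r = comap ((↑) : Hyp → ℂ) (𝓝 (r : ℂ)) := by
  rw [← OnePoint.comap_coe_nhds, comap_comap]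
  rfl

lemma bdryToSphere_injective : Function.Injective bdryToSphere :=
  Option.map_injective Complex.ofReal_injective

lemma eq_of_tendsto_tendsToBdry {ι : Type*} {l : Filter ι} [l.NeBot] {f : ι → Hyp} {a b : Bdry}
    (ha : Tendsto f l (tendsToBdry a)) (hb : Tendsto f l (tendsToBdry b)) : a = b :=
  bdryToSphere_injective (tendsto_nhds_unique (tendsto_comap_iff.1 ha) (tendsto_comap_iff.1 hb))

lemma joinsBdry_iff {c : ℝ → Hyp} {a b : Bdry} :
    JoinsBdry c a b ↔ Tendsto c atBot (tendsToBdry a) ∧ Tendsto c atTop (tendsToBdry b) := by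
  simp only [JoinsBdry, tendsToBdry, tendsto_comap_iff]
  rfl

namespace UpperHalfPlane

variable (g : SL(2, ℝ))

lemma coe_SL_smul (z : Hyp) :
    ((g • z : Hyp) : ℂ) = (g 0 0 * z + g 0 1) / (g 1 0 * z + g 1 1) := by
  simpa using coe_specialLinearGroup_apply g z

lemma SL_denom_ne_zero (z : Hyp) : (g 1 0 * z + g 1 1 : ℂ) ≠ 0 := by
  simpa [denom] using denom_ne_zero (mapGL ℝ g) z

lemma coe_SL_smul_eq_sub_inv {g : SL(2, ℝ)} (hc : g 1 0 ≠ 0) (z : Hyp) :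
    ((g • z : Hyp) : ℂ) = (g 0 0 : ℂ) / g 1 0 - ((g 1 0 : ℂ) * (g 1 0 * z + g 1 1))⁻¹ := by
  have hden : (z * g 1 0 + g 1 1 : ℂ) ≠ 0 := mul_comm (z : ℂ) (g 1 0) ▸ SL_denom_ne_zero g z
  have hc' : (g 1 0 : ℂ) ≠ 0 := by exact_mod_cast hc
  have hdet : (g 0 0 * g 1 1 - g 0 1 * g 1 0 : ℂ) = 1 := by exact_mod_cast g.fin_two_det_eq_one
  rw [coe_SL_smul]
  field_simp
  linear_combination -hdet

lemma tendsto_SL_smul_tendsToBdry_infty :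
    Tendsto (g • ·) (tendsToBdry ∞) (tendsToBdry (mapGL ℝ g • ∞)) := by
  have hdet := g.fin_two_det_eq_one
  rw [OnePoint.mapGL_smul_infty, tendsToBdry_infty]
  split_ifs with hc
  · have ha : (g 0 0 : ℂ) ≠ 0 := by
      norm_cast; rintro h; simp [h, hc] at hdet
    have hd : (g 1 1 : ℂ) ≠ 0 := by
      norm_cast; rintro h; simp [h, hc] at hdet
    have hf : Tendsto (fun w : ℂ => (g 0 0 * w + g 0 1) * (g 1 1 : ℂ)⁻¹)
        (cobounded ℂ) (cobounded ℂ) :=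
      (tendsto_mul_right_cobounded (inv_ne_zero hd)).comp
        ((tendsto_add_const_cobounded _).comp (tendsto_mul_left_cobounded ha))
    rw [tendsToBdry_infty, tendsto_comap_iff]
    convert hf.comp tendsto_comap using 1
    ext z
    simp [coe_SL_smul, hc, div_eq_mul_inv]
  · have hc' : (g 1 0 : ℂ) ≠ 0 := by exact_mod_cast hc
    have hf : Tendsto (fun w : ℂ => (g 0 0 / g 1 0 : ℂ) - (g 1 0 * (g 1 0 * w + g 1 1))⁻¹)
        (cobounded ℂ) (𝓝 (g 0 0 / g 1 0 : ℂ)) := by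
      simpa using tendsto_const_nhds.sub (tendsto_inv₀_cobounded.comp
        ((tendsto_mul_left_cobounded hc').comp
          ((tendsto_add_const_cobounded _).comp (tendsto_mul_left_cobounded hc'))))
    rw [tendsToBdry_coe, tendsto_comap_iff]
    convert hf.comp tendsto_comap using 1
    · ext z
      simp [coe_SL_smul_eq_sub_inv hc]
    · push_cast; rfl

lemma tendsto_SL_smul_tendsToBdry_coe (r : ℝ) :
    Tendsto (g • ·) (tendsToBdry r) (tendsToBdry (mapGL ℝ g • (r : Bdry))) := by
  have hdet := g.fin_two_det_eq_one
  rw [OnePoint.mapGL_smul_coe]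
  split_ifs with hr
  · have hc : g 1 0 ≠ 0 := by
      rintro hc; simp only [hc, zero_mul, zero_add] at hr; simp [hc, hr] at hdet
    have hden : Tendsto (fun z : Hyp => (g 1 0 : ℂ) * (g 1 0 * z + g 1 1))
        (tendsToBdry r) (𝓝[≠] 0) := by
      refine tendsto_nhdsWithin_iff.mpr ⟨?_, Eventually.of_forall fun z =>
        mul_ne_zero (by exact_mod_cast hc) (SL_denom_ne_zero g z)⟩
      rw [tendsToBdry_coe]
      have : (g 1 0 : ℂ) * (g 1 0 * r + g 1 1) = 0 := by norm_cast; simp [hr]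
      exact this ▸ (((continuous_const_mul _).comp ((continuous_const_mul _).add
        continuous_const)).tendsto _).comp tendsto_comap
    rw [tendsToBdry_infty, tendsto_comap_iff]
    convert (tendsto_const_sub_cobounded ((g 0 0 : ℂ) / g 1 0)).comp
      (tendsto_inv₀_nhdsNE_zero.comp hden) using 1
    ext z
    simp [coe_SL_smul_eq_sub_inv hc]
  · have hr' : (g 1 0 * r + g 1 1 : ℂ) ≠ 0 := by exact_mod_cast hr
    have hf : Tendsto (fun w : ℂ => (g 0 0 * w + g 0 1) / (g 1 0 * w + g 1 1)) (𝓝 (r : ℂ))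
        (𝓝 ((g 0 0 * r + g 0 1) / (g 1 0 * r + g 1 1))) :=
      ((tendsto_id.const_mul _).add_const _).div ((tendsto_id.const_mul _).add_const _) hr'
    rw [tendsToBdry_coe, tendsToBdry_coe, tendsto_comap_iff]
    convert hf.comp tendsto_comap using 1
    · ext z
      simp [coe_SL_smul]
    · push_cast; rfl

lemma tendsto_SL_smul_tendsToBdry (a : Bdry) :
    Tendsto (g • ·) (tendsToBdry a) (tendsToBdry (mapGL ℝ g • a)) := by
  induction a using OnePoint.rec with
  | infty => exact tendsto_SL_smul_tendsToBdry_infty g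
  | coe r => exact tendsto_SL_smul_tendsToBdry_coe g r

end UpperHalfPlane

lemma IsGeodesicLine.smul {c : ℝ → Hyp} (hc : IsGeodesicLine c) (g : SL(2, ℝ)) :
    IsGeodesicLine (fun t => g • c t) := fun s t => (dist_smul g _ _).trans (hc s t)

lemma smul_mem_idealGeodesic (g : SL(2, ℝ)) {a b : Bdry} {z : Hyp} (hz : z ∈ idealGeodesic a b) :
    g • z ∈ idealGeodesic (mapGL ℝ g • a) (mapGL ℝ g • b) := by
  obtain ⟨c, hc, hjoin, u, rfl⟩ := hz
  rw [joinsBdry_iff] at hjoin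
  exact ⟨fun t => g • c t, hc.smul g,
    joinsBdry_iff.2 ⟨(UpperHalfPlane.tendsto_SL_smul_tendsToBdry g a).comp hjoin.1,
      (UpperHalfPlane.tendsto_SL_smul_tendsToBdry g b).comp hjoin.2⟩, u, rfl⟩

lemma IsNearestProj.SL_conj {a b : Bdry} {p : Hyp → Hyp} (hp : IsNearestProj a b p)
    (g : SL(2, ℝ)) :
    IsNearestProj (mapGL ℝ g • a) (mapGL ℝ g • b) (fun y => g • p (g⁻¹ • y)) := by
  intro y
  refine ⟨smul_mem_idealGeodesic g (hp _).1, fun z hz => ?_⟩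
  have hz' : g⁻¹ • z ∈ idealGeodesic a b := by
    simpa [map_inv, inv_smul_smul] using smul_mem_idealGeodesic g⁻¹ hz
  calc dist y (g • p (g⁻¹ • y)) = dist (g⁻¹ • y) (p (g⁻¹ • y)) := by
        rw [← dist_smul g⁻¹, inv_smul_smul]
    _ ≤ dist (g⁻¹ • y) (g⁻¹ • z) := (hp _).2 _ hz'
    _ = dist y z := dist_smul _ _ _

lemma exists_mapGL_smul_eq_infty (b : Bdry) : ∃ g : SL(2, ℝ), mapGL ℝ g • b = ∞ := by
  induction b using OnePoint.rec with
  | infty => exact ⟨1, by simp⟩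
  | coe x =>
    let g : SL(2, ℝ) := ⟨!![0, -1; 1, -x], by simp [det_fin_two]⟩
    refine ⟨g, ?_⟩
    rw [OnePoint.mapGL_smul_coe, if_pos]
    simp [g]

section VerticalGeodesics

open Real

-- The Busemann function of `∞` is `z ↦ -log (Im z)`.
lemma tendsto_exp_half_dist_mul_sqrt_im_div_norm (z : Hyp) :
    Tendsto (fun q : Hyp => exp (dist z q / 2) * √q.im / ‖(q : ℂ)‖) (tendsToBdry ∞)
      (𝓝 (√z.im)⁻¹) := by
  have h := ((tendsto_norm_sub_div_norm_cobounded (z : ℂ)).add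
    (tendsto_norm_sub_div_norm_cobounded (starRingEnd ℂ z))).div_const (2 * √z.im)
  rw [tendsToBdry_infty]
  convert h.comp tendsto_comap using 1
  · ext q
    have hq : 0 < √q.im := sqrt_pos.mpr q.im_pos
    have hconj : ‖(z : ℂ) - starRingEnd ℂ q‖ = ‖(q : ℂ) - starRingEnd ℂ z‖ := by
      rw [← Complex.norm_conj, map_sub, Complex.conj_conj, norm_sub_rev]
    simp only [Function.comp_apply, UpperHalfPlane.exp_half_dist, Complex.dist_eq,
      sqrt_mul z.im_pos.le, hconj, norm_sub_rev (z : ℂ)]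
    field_simp
  · rw [one_add_one_eq_two, div_mul_cancel_left₀ two_ne_zero]

lemma IsGeodesicLine.im_eq_mul_exp {c : ℝ → Hyp} (hc : IsGeodesicLine c)
    (htop : Tendsto c atTop (tendsToBdry ∞)) (s : ℝ) : (c s).im = (c 0).im * exp s := by
  have hlim : ∀ s, Tendsto (fun t => exp (t / 2) * √(c t).im / ‖(c t : ℂ)‖) atTop
      (𝓝 (exp (s / 2) * (√(c s).im)⁻¹)) := fun s => by
    refine (((tendsto_exp_half_dist_mul_sqrt_im_div_norm (c s)).comp htop).const_mul
      (exp (s / 2))).congr' ?_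
    filter_upwards [eventually_ge_atTop s] with t hst
    rw [Function.comp_apply, hc, abs_sub_comm, abs_of_nonneg (sub_nonneg.2 hst), mul_div_assoc,
      mul_div_assoc, ← mul_assoc, ← exp_add]
    ring_nf
  have hsqrt : √(c s).im = √(c 0).im * exp (s / 2) := by
    have h := tendsto_nhds_unique (hlim s) (hlim 0)
    have := (sqrt_pos.mpr (c s).im_pos).ne'
    have := (sqrt_pos.mpr (c 0).im_pos).ne'
    simp only [zero_div, exp_zero, one_mul] at h
    field_simp at h
    linarith
  calc (c s).im = √(c s).im ^ 2 := (sq_sqrt (c s).im_pos.le).symm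
    _ = (c 0).im * exp s := by
      rw [hsqrt, mul_pow, sq_sqrt (c 0).im_pos.le, ← exp_nat_mul]
      ring_nf

lemma IsGeodesicLine.re_eq {c : ℝ → Hyp} (hc : IsGeodesicLine c)
    (htop : Tendsto c atTop (tendsToBdry ∞)) (s : ℝ) : (c s).re = (c 0).re := by
  have h := UpperHalfPlane.cosh_dist' (c s) (c 0)
  rw [hc, sub_zero, cosh_abs, hc.im_eq_mul_exp htop s, cosh_eq] at h
  have hA := (c 0).im_pos
  have hexp := exp_pos s
  have hinv : exp s * exp (-s) = 1 := by rw [← exp_add, add_neg_cancel, exp_zero]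
  field_simp at h
  have : ((c s).re - (c 0).re) ^ 2 = 0 := by nlinarith
  simpa [sub_eq_zero] using this

def verticalGeodesic (x t : ℝ) : Hyp := ⟨⟨x, exp t⟩, exp_pos t⟩

lemma isGeodesicLine_verticalGeodesic (x : ℝ) : IsGeodesicLine (verticalGeodesic x) :=
  fun s t => ((UpperHalfPlane.isometry_vertical_line x).dist_eq s t).trans (Real.dist_eq s t)

lemma tendsto_verticalGeodesic_atBot (x : ℝ) :
    Tendsto (verticalGeodesic x) atBot (tendsToBdry x) := by
  rw [tendsToBdry_coe, tendsto_comap_iff]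
  have h := (Complex.continuous_ofReal.tendsto 0).comp tendsto_exp_atBot
  simpa [Function.comp_def, verticalGeodesic, Complex.mk_eq_add_mul_I] using
    (h.mul_const Complex.I).const_add (x : ℂ)

lemma tendsto_verticalGeodesic_atTop (x : ℝ) :
    Tendsto (verticalGeodesic x) atTop (tendsToBdry ∞) := by
  rw [tendsToBdry_infty, tendsto_comap_iff, ← tendsto_norm_atTop_iff_cobounded]
  refine tendsto_atTop_mono (fun t => ?_) tendsto_exp_atTop
  simpa [verticalGeodesic, abs_of_pos (exp_pos t)] using
    Complex.abs_im_le_norm (verticalGeodesic x t : ℂ)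

lemma IsGeodesicLine.eq_verticalGeodesic {c : ℝ → Hyp} (hc : IsGeodesicLine c)
    (htop : Tendsto c atTop (tendsToBdry ∞)) (t : ℝ) :
    c t = verticalGeodesic (c 0).re (t + log (c 0).im) := by
  refine UpperHalfPlane.ext (Complex.ext ?_ ?_)
  · exact hc.re_eq htop t
  · simp [verticalGeodesic, hc.im_eq_mul_exp htop t, exp_add, exp_log (c 0).im_pos, mul_comm]

lemma mem_idealGeodesic_infty_iff {a : Bdry} {z : Hyp} : z ∈ idealGeodesic a ∞ ↔ a = z.re := by
  constructor
  · rintro ⟨c, hc, hjoin, u, rfl⟩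
    rw [joinsBdry_iff] at hjoin
    have hbot : Tendsto c atBot (tendsToBdry (c 0).re) := by
      rw [funext (hc.eq_verticalGeodesic hjoin.2)]
      exact (tendsto_verticalGeodesic_atBot _).comp (tendsto_atBot_add_const_right _ _ tendsto_id)
    rw [eq_of_tendsto_tendsToBdry hjoin.1 hbot, hc.re_eq hjoin.2 u]
  · rintro rfl
    refine ⟨verticalGeodesic z.re, isGeodesicLine_verticalGeodesic _,
      joinsBdry_iff.2 ⟨tendsto_verticalGeodesic_atBot _, tendsto_verticalGeodesic_atTop _⟩,
      log z.im, ?_⟩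
    exact UpperHalfPlane.ext (Complex.ext rfl (exp_log z.im_pos))

def verticalProj (x : ℝ) (y : Hyp) : Hyp :=
  ⟨⟨x, ‖(y : ℂ) - x‖⟩, norm_pos_iff.2 (sub_ne_zero.2 (y.ne_ofReal x))⟩

lemma IsNearestProj.eq_verticalProj {x : ℝ} {p : Hyp → Hyp} (hp : IsNearestProj x ∞ p)
    (y : Hyp) : p y = verticalProj x y := by
  obtain ⟨hmem, hmin⟩ := hp y
  have hre : (p y).re = x := by
    simpa using (mem_idealGeodesic_infty_iff.1 hmem).symm
  set R := ‖(y : ℂ) - x‖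
  have hR : R ^ 2 = (y.re - x) ^ 2 + y.im ^ 2 := by
    simp only [R, Complex.sq_norm, Complex.normSq_apply, Complex.sub_re, Complex.sub_im,
      Complex.ofReal_re, Complex.ofReal_im, UpperHalfPlane.coe_re, UpperHalfPlane.coe_im, sub_zero]
    ring
  have hle : cosh (dist y (p y)) ≤ cosh (dist y (verticalProj x y)) := cosh_le_cosh.2 (by
    simpa only [abs_dist] using hmin (verticalProj x y) (mem_idealGeodesic_infty_iff.2 rfl))
  rw [UpperHalfPlane.cosh_dist', UpperHalfPlane.cosh_dist', hre] at hle
  have hy := y.im_pos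
  have hh := (p y).im_pos
  have hRpos : 0 < R := (verticalProj x y).im_pos
  change _ ≤ ((y.re - x) ^ 2 + y.im ^ 2 + R ^ 2) / (2 * y.im * R) at hle
  rw [div_le_div_iff₀ (by positivity) (by positivity), ← hR] at hle
  -- `(R ^ 2 + h ^ 2) / h` is minimal exactly at `h = R`
  have hsq : 2 * y.im * R * ((p y).im - R) ^ 2 ≤ 0 := by nlinarith
  have him : (p y).im = R := sub_eq_zero.1 (pow_eq_zero_iff two_ne_zero |>.1
    (le_antisymm (nonpos_of_mul_nonpos_right hsq (by positivity)) (sq_nonneg _)))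
  exact UpperHalfPlane.ext (Complex.ext hre him)

lemma tendsto_norm_coe_sub_tendsToBdry_infty (x : ℝ) :
    Tendsto (fun y : Hyp => ‖(y : ℂ) - x‖) (tendsToBdry ∞) atTop := by
  rw [tendsToBdry_infty, tendsto_norm_atTop_iff_cobounded]
  exact (tendsto_sub_const_cobounded _).comp tendsto_comap

lemma dist_verticalProj_le (x₁ x₂ : ℝ) (y : Hyp) :
    dist (verticalProj x₂ y) (verticalProj x₁ y) ≤
      2 * |x₂ - x₁| / √(‖(y : ℂ) - x₂‖ * ‖(y : ℂ) - x₁‖) := by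
  refine (UpperHalfPlane.dist_le_dist_coe_div_sqrt _ _).trans
    (div_le_div_of_nonneg_right ?_ (sqrt_nonneg _))
  have him : |‖(y : ℂ) - x₂‖ - ‖(y : ℂ) - x₁‖| ≤ |x₂ - x₁| := by
    have h := abs_norm_sub_norm_le ((y : ℂ) - x₂) ((y : ℂ) - x₁)
    rwa [sub_sub_sub_cancel_left, ← Complex.ofReal_sub, Complex.norm_real, norm_eq_abs,
      abs_sub_comm x₁] at h
  calc dist (verticalProj x₂ y : ℂ) (verticalProj x₁ y)
      ≤ |x₂ - x₁| + |‖(y : ℂ) - x₂‖ - ‖(y : ℂ) - x₁‖| := by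
        rw [Complex.dist_eq]
        exact Complex.norm_le_abs_re_add_abs_im _
    _ ≤ 2 * |x₂ - x₁| := by linarith

lemma tendsto_dist_verticalProj (x₁ x₂ : ℝ) :
    Tendsto (fun y => dist (verticalProj x₂ y) (verticalProj x₁ y)) (tendsToBdry ∞) (𝓝 0) := by
  have hden := tendsto_sqrt_atTop.comp
    ((tendsto_norm_coe_sub_tendsToBdry_infty x₂).atTop_mul_atTop₀
      (tendsto_norm_coe_sub_tendsToBdry_infty x₁))
  exact squeeze_zero (fun _ => dist_nonneg) (dist_verticalProj_le x₁ x₂)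
    (tendsto_const_nhds.div_atTop hden)

end VerticalGeodesics

lemma tendsto_dist_of_isNearestProj_infty {a₁ a₂ : Bdry} {p₁ p₂ : Hyp → Hyp}
    (hp₁ : IsNearestProj a₁ ∞ p₁) (hp₂ : IsNearestProj a₂ ∞ p₂) :
    Tendsto (fun y => dist (p₂ y) (p₁ y)) (tendsToBdry ∞) (𝓝 0) := by
  obtain ⟨x₁, rfl⟩ : ∃ x : ℝ, a₁ = x :=
    ⟨_, mem_idealGeodesic_infty_iff.1 (hp₁ UpperHalfPlane.I).1⟩
  obtain ⟨x₂, rfl⟩ : ∃ x : ℝ, a₂ = x :=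
    ⟨_, mem_idealGeodesic_infty_iff.1 (hp₂ UpperHalfPlane.I).1⟩
  simpa only [hp₁.eq_verticalProj, hp₂.eq_verticalProj] using tendsto_dist_verticalProj _ _

theorem projections_close_near_common_endpoint_general
    (α₁ α₂ β : Bdry)
    (π₁ π₂ : Hyp → Hyp)
    (hπ₁ : IsNearestProj α₁ β π₁) (hπ₂ : IsNearestProj α₂ β π₂) :
    Tendsto (fun y : Hyp => dist (π₂ y) (π₁ y)) (tendsToBdry β) (𝓝 0) := by
  obtain ⟨g, hg⟩ := exists_mapGL_smul_eq_infty β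
  have hπ₁' := hπ₁.SL_conj g
  have hπ₂' := hπ₂.SL_conj g
  have hgβ := UpperHalfPlane.tendsto_SL_smul_tendsToBdry g β
  rw [hg] at hπ₁' hπ₂' hgβ
  refine ((tendsto_dist_of_isNearestProj_infty hπ₁' hπ₂').comp hgβ).congr fun y => ?_
  simp only [Function.comp_apply, inv_smul_smul, dist_smul]

/-- If $α_1 ≠ β$ and $α_2 ≠ β$ are ideal points and $π_{α_i,β}$ are the
orthogonal projections onto the geodesics $(α_i,β)$, then
$d(π_{α_2,β}(y), π_{α_1,β}(y)) → 0$ as $y → β$ in $\overline{ℍ^2}$. -/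
theorem projections_close_near_common_endpoint
    (α₁ α₂ β : Bdry) (h₁ : α₁ ≠ β) (h₂ : α₂ ≠ β)
    (π₁ π₂ : Hyp → Hyp)
    (hπ₁ : IsNearestProj α₁ β π₁) (hπ₂ : IsNearestProj α₂ β π₂) :
    Tendsto (fun y : Hyp => dist (π₂ y) (π₁ y)) (tendsToBdry β) (𝓝 0) :=
  projections_close_near_common_endpoint_general α₁ α₂ β π₁ π₂ hπ₁ hπ₂
end
end

section
/- Let $\hat{\pi}: \hat{X} \to X$ be a surjective local isometry between compact metric spaces, and let $\hat{h}: \hat{X} \to \hat{X}$ and $h: X \to X$ be homeomorphisms satisfying $\hat{\pi} \circ \hat{h} = h \circ \hat{\pi}$. Then the topological entropies coincide: $h_{top}(\hat{h}) = h_{top}(h)$. -/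
open Filter Topology Set
open scoped ENNReal NNReal

noncomputable section

variable {X : Type*} [MetricSpace X]

/-- The Bowen dynamical distance `dₙ(x,y) = max_{0 ≤ k ≤ n-1} d(f^k x, f^k y)`. -/
def bowenDist (f : X → X) (n : ℕ) (x y : X) : ℝ :=
  ((Finset.range n).sup fun k => nndist (f^[k] x) (f^[k] y) : NNReal)

/-- A set is `(n,ε)`-separated if any two distinct points of it are at Bowen
distance `dₙ` at least `ε`. -/
def IsDynSeparated (f : X → X) (n : ℕ) (ε : ℝ) (A : Set X) : Prop :=
  ∀ x ∈ A, ∀ y ∈ A, x ≠ y → ε ≤ bowenDist f n x y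

/-- `a_{n,ε}`: the maximal cardinality of an `(n,ε)`-separated set. -/
def maxSepCard (f : X → X) (n : ℕ) (ε : ℝ) : ℕ∞ :=
  ⨆ (A : Finset X) (_ : IsDynSeparated f n ε ↑A), (A.card : ℕ∞)

/-- Bowen's topological entropy
`h_top(f) = lim_{ε→0} limsup_n (log a_{n,ε})/n`, the limit over `ε → 0` being a
supremum since `ε ↦ limsup` is antitone. -/
def bowenEntropy (f : X → X) : EReal :=
  ⨆ (ε : ℝ) (_ : 0 < ε),
    Filter.limsup
      (fun n : ℕ => ENNReal.log ((maxSepCard f n ε : ℕ∞) : ℝ≥0∞) / (n : EReal))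
      Filter.atTop

/-- `π` is a local isometry: every point has a neighbourhood on which `π`
preserves distances. -/
def IsLocalIsometry {Y : Type*} [MetricSpace Y] (π : X → Y) : Prop :=
  ∀ x : X, ∃ U ∈ 𝓝 x, ∀ y ∈ U, ∀ z ∈ U, dist (π y) (π z) = dist y z

/-!
A local isometry of a compact space is isometric on all pairs of points at distance `< δ`
(a Lebesgue number). Lifting an `(n, ε)`-separated set of `h` through a section of `π` gives
one of `ĥ` as soon as `ε ≤ δ`, so `h_top(h) ≤ h_top(ĥ)`. Conversely, group the points of an
`(n, ε)`-separated set of `ĥ` by a point of an `(n, η)`-spanning set of `h` near their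
projections. Two points in one group are `δ`-apart, since otherwise their orbits would shadow
the projected ones and stay `2η`-close. A `δ`-separated subset of the compact space `X̂` has
at most `N` points, so `a_{n,ε}(ĥ) ≤ N a_{n,η}(h)`, and the constant `N` does not change the
exponential growth rate.
-/

open ExpGrowth

lemma bowenDist_eq_dist_orbit (f : X → X) (n : ℕ) (x y : X) :
    bowenDist f n x y = dist (fun k : Fin n => f^[k] x) (fun k : Fin n => f^[k] y) := by
  rw [bowenDist, dist_pi_def, ← Nat.Iio_eq_range, ← Fin.map_valEmbedding_univ, Finset.sup_map]
  rfl

lemma bowenDist_self (f : X → X) (n : ℕ) (x : X) : bowenDist f n x x = 0 := by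
  rw [bowenDist_eq_dist_orbit, dist_self]

lemma bowenDist_comm (f : X → X) (n : ℕ) (x y : X) :
    bowenDist f n x y = bowenDist f n y x := by
  simp only [bowenDist_eq_dist_orbit, dist_comm]

lemma bowenDist_triangle (f : X → X) (n : ℕ) (x y z : X) :
    bowenDist f n x z ≤ bowenDist f n x y + bowenDist f n y z := by
  simp only [bowenDist_eq_dist_orbit]
  exact dist_triangle _ _ _

lemma dist_iterate_le_bowenDist (f : X → X) {n k : ℕ} (hk : k < n) (x y : X) :
    dist (f^[k] x) (f^[k] y) ≤ bowenDist f n x y := by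
  rw [bowenDist_eq_dist_orbit]
  exact dist_le_pi_dist (fun i : Fin n => f^[i] x) (fun i : Fin n => f^[i] y) ⟨k, hk⟩

lemma maxSepCard_anti (f : X → X) (n : ℕ) {ε ε' : ℝ} (h : ε' ≤ ε) :
    maxSepCard f n ε ≤ maxSepCard f n ε' :=
  iSup₂_le fun A hA =>
    le_iSup₂_of_le A (fun x hx y hy hxy => h.trans (hA x hx y hy hxy)) le_rfl

lemma card_le_maxSepCard {f : X → X} {n : ℕ} {ε : ℝ} {A : Finset X}
    (hA : IsDynSeparated f n ε ↑A) : (A.card : ℕ∞) ≤ maxSepCard f n ε :=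
  le_iSup₂_of_le A hA le_rfl

/-- A maximal separated subset of a finite set is spanning for it. -/
lemma exists_isDynSeparated_forall_mem_bowenDist_lt (f : X → X) (n : ℕ) {η : ℝ}
    (hη : 0 < η) (S : Finset X) :
    ∃ B : Finset X, IsDynSeparated f n η ↑B ∧ ∀ x ∈ S, ∃ b ∈ B, bowenDist f n x b < η := by
  classical
  obtain ⟨B, hBmem, hBmax⟩ := Finset.exists_max_image
    (S.powerset.filter fun B : Finset X => IsDynSeparated f n η ↑B) Finset.card
    ⟨∅, by simp [IsDynSeparated]⟩
  rw [Finset.mem_filter, Finset.mem_powerset] at hBmem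
  obtain ⟨hBS, hB⟩ := hBmem
  refine ⟨B, hB, fun x hx => ?_⟩
  by_contra! hfar
  have hxB : x ∉ B := fun hxB => (hfar x hxB).not_gt (by rwa [bowenDist_self])
  have hsep : IsDynSeparated f n η ↑(insert x B) := by
    intro a ha c hc hac
    rw [Finset.coe_insert, Set.mem_insert_iff] at ha hc
    rcases ha with rfl | ha <;> rcases hc with rfl | hc
    · exact absurd rfl hac
    · exact hfar c hc
    · exact bowenDist_comm f n a _ ▸ hfar a ha
    · exact hB a ha c hc hac
  have := hBmax (insert x B)
    (Finset.mem_filter.2 ⟨Finset.mem_powerset.2 (Finset.insert_subset hx hBS), hsep⟩)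
  rw [Finset.card_insert_of_notMem hxB] at this
  omega

lemma IsLocalIsometry.exists_uniform_radius {Y : Type*} [MetricSpace Y] [CompactSpace X]
    {π : X → Y} (hπ : IsLocalIsometry π) :
    ∃ δ > 0, ∀ u v : X, dist u v < δ → dist (π u) (π v) = dist u v := by
  choose U hU hUiso using hπ
  obtain ⟨δ, hδ, hball⟩ := lebesgue_number_lemma_of_metric isCompact_univ
    (fun x => isOpen_interior (s := U x))
    (fun y _ => mem_iUnion.2 ⟨y, mem_interior_iff_mem_nhds.2 (hU y)⟩)
  refine ⟨δ, hδ, fun u v huv => ?_⟩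
  obtain ⟨x, hx⟩ := hball u (mem_univ u)
  exact hUiso x u (interior_subset (hx (Metric.mem_ball_self hδ)))
    v (interior_subset (hx (Metric.mem_ball'.2 huv)))

lemma exists_card_le_of_pairwise_le_dist [CompactSpace X] {δ : ℝ} (hδ : 0 < δ) :
    ∃ N : ℕ, ∀ A : Finset X, (A : Set X).Pairwise (fun x y => δ ≤ dist x y) → A.card ≤ N := by
  obtain ⟨t, htf, htcover⟩ := Metric.totallyBounded_iff.1
    (isCompact_univ (X := X)).totallyBounded (δ / 2) (half_pos hδ)
  have hcenter : ∀ x : X, ∃ c ∈ t, dist x c < δ / 2 := fun x => by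
    simpa using mem_iUnion₂.1 (htcover (mem_univ x))
  choose c hct hc using hcenter
  refine ⟨htf.toFinset.card, fun A hA => Finset.card_le_card_of_injOn c
    (fun x _ => htf.mem_toFinset.2 (hct x)) fun x hx y hy hxy => ?_⟩
  by_contra hne
  have : dist x y < δ := calc
    dist x y ≤ dist x (c x) + dist y (c y) := by
      rw [hxy, dist_comm y (c y)]; exact dist_triangle _ _ _
    _ < δ / 2 + δ / 2 := add_lt_add (hc x) (hc y)
    _ = δ := add_halves δ
  exact (hA hx hy hne).not_gt this

section Semiconj

variable {Y : Type*} [MetricSpace Y] {π : Y → X} {g : Y → Y} {f : X → X} {δ : ℝ} {n : ℕ}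

lemma bowenDist_map_eq (hiso : ∀ u v, dist u v < δ → dist (π u) (π v) = dist u v)
    (hsc : Function.Semiconj π g f) {x y : Y}
    (hxy : ∀ k < n, dist (g^[k] x) (g^[k] y) < δ) :
    bowenDist f n (π x) (π y) = bowenDist g n x y := by
  unfold bowenDist
  congr 1
  refine Finset.sup_congr rfl fun k hk => ?_
  rw [← (hsc.iterate_right k).eq x, ← (hsc.iterate_right k).eq y]
  exact NNReal.eq (hiso _ _ (hxy k (Finset.mem_range.1 hk)))

/-- Induction along the orbit: `δ`-closeness at time `k` makes `π` isometric there, so the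
`ρ`-closeness of the projections gives `δ`-closeness at time `k + 1`. -/
lemma bowenDist_eq_of_dist_lt (hiso : ∀ u v, dist u v < δ → dist (π u) (π v) = dist u v)
    (hsc : Function.Semiconj π g f) {ρ : ℝ} (hρ : ∀ ⦃a b : Y⦄, dist a b < ρ → dist (g a) (g b) < δ)
    {x y : Y} (hxy : dist x y < δ) (hπ : bowenDist f n (π x) (π y) < ρ) :
    bowenDist g n x y = bowenDist f n (π x) (π y) := by
  suffices ∀ k < n, dist (g^[k] x) (g^[k] y) < δ from (bowenDist_map_eq hiso hsc this).symm
  intro k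
  induction k with
  | zero => exact fun _ => by simpa using hxy
  | succ k ih =>
    intro hk
    have hclose : dist (g^[k] x) (g^[k] y) < ρ := calc
      dist (g^[k] x) (g^[k] y) = dist (π (g^[k] x)) (π (g^[k] y)) := (hiso _ _ (ih (by omega))).symm
      _ = dist (f^[k] (π x)) (f^[k] (π y)) := by
        rw [(hsc.iterate_right k).eq x, (hsc.iterate_right k).eq y]
      _ ≤ bowenDist f n (π x) (π y) := dist_iterate_le_bowenDist f (by omega) _ _
      _ < ρ := hπ
    rw [Function.iterate_succ_apply', Function.iterate_succ_apply']
    exact hρ hclose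

lemma maxSepCard_le_maxSepCard_of_surjective
    (hiso : ∀ u v, dist u v < δ → dist (π u) (π v) = dist u v) (hsurj : Function.Surjective π)
    (hsc : Function.Semiconj π g f) {ε : ℝ} (hεδ : ε ≤ δ) :
    maxSepCard f n ε ≤ maxSepCard g n ε := by
  classical
  refine iSup₂_le fun A hA => ?_
  set s := Function.surjInv hsurj
  have hsep : IsDynSeparated g n ε ↑(A.image s) := by
    simp only [Finset.coe_image, IsDynSeparated, mem_image]
    rintro _ ⟨a, ha, rfl⟩ _ ⟨c, hc, rfl⟩ hac
    by_contra! hlt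
    have hmap := bowenDist_map_eq hiso hsc fun k hk =>
      ((dist_iterate_le_bowenDist g hk _ _).trans_lt hlt).trans_le hεδ
    rw [Function.surjInv_eq hsurj, Function.surjInv_eq hsurj] at hmap
    exact (hA a ha c hc (ne_of_apply_ne s hac)).not_gt (hmap ▸ hlt)
  rw [← Finset.card_image_of_injective A (Function.injective_surjInv hsurj)]
  exact card_le_maxSepCard hsep

lemma maxSepCard_le_mul_maxSepCard
    (hiso : ∀ u v, dist u v < δ → dist (π u) (π v) = dist u v) (hsc : Function.Semiconj π g f)
    {N : ℕ} (hN : ∀ A : Finset Y, (A : Set Y).Pairwise (fun x y => δ ≤ dist x y) → A.card ≤ N)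
    {ρ : ℝ} (hρ : ∀ ⦃a b : Y⦄, dist a b < ρ → dist (g a) (g b) < δ)
    {ε η : ℝ} (hη : 0 < η) (hηρ : 2 * η ≤ ρ) (hηε : 2 * η ≤ ε) :
    maxSepCard g n ε ≤ N * maxSepCard f n η := by
  classical
  refine iSup₂_le fun A hA => ?_
  obtain ⟨B, hB, hspan⟩ :=
    exists_isDynSeparated_forall_mem_bowenDist_lt f n hη (A.image π)
  choose! b hbB hb using hspan
  have hfiber : ∀ z ∈ A.image (b ∘ π), (A.filter fun a => b (π a) = z).card ≤ N := by
    intro z _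
    refine hN _ fun x hx y hy hxy => ?_
    simp only [Finset.coe_filter, mem_ofPred_eq] at hx hy
    have hπ : bowenDist f n (π x) (π y) < 2 * η := calc
      bowenDist f n (π x) (π y) ≤ bowenDist f n (π x) z + bowenDist f n z (π y) :=
        bowenDist_triangle _ _ _ _ _
      _ < η + η := add_lt_add (hx.2 ▸ hb _ (Finset.mem_image_of_mem π hx.1))
          (bowenDist_comm f n (π y) z ▸ hy.2 ▸ hb _ (Finset.mem_image_of_mem π hy.1))
      _ = 2 * η := by ring
    by_contra! hlt
    have := bowenDist_eq_of_dist_lt hiso hsc hρ hlt (hπ.trans_le hηρ)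
    exact (hA x hx.1 y hy.1 hxy).not_gt (by linarith)
  have hp : A.image (b ∘ π) ⊆ B :=
    Finset.image_subset_iff.2 fun a ha => hbB _ (Finset.mem_image_of_mem π ha)
  calc (A.card : ℕ∞) ≤ ((N * B.card : ℕ) : ℕ∞) := by
        exact_mod_cast (Finset.card_le_mul_card_image A N hfiber).trans
          (Nat.mul_le_mul_left N (Finset.card_le_card hp))
    _ ≤ N * maxSepCard f n η := by
        push_cast
        gcongr
        exact card_le_maxSepCard hB

end Semiconj

lemma bowenEntropy_le_of_maxSepCard_le {Y : Type*} [MetricSpace Y] {f : X → X} {g : Y → Y}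
    (h : ∀ ε > 0, ∃ η > 0, ∃ C : ℕ, ∀ n, maxSepCard f n ε ≤ C * maxSepCard g n η) :
    bowenEntropy f ≤ bowenEntropy g := by
  refine iSup₂_le fun ε hε => ?_
  obtain ⟨η, hη, C, hC⟩ := h ε hε
  refine le_iSup₂_of_le (f := fun η (_ : 0 < η) =>
    expGrowthSup fun n => (maxSepCard g n η : ℝ≥0∞)) η hη ?_
  refine expGrowthSup_le_of_eventually_le (b := C) (ENNReal.natCast_ne_top C)
    (Eventually.of_forall fun n => ?_)
  simpa [ENat.toENNReal_mul] using ENat.toENNReal_le.2 (hC n)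

theorem entropy_eq_of_localIsometry_semiconj_general
    {Xhat X : Type*} [MetricSpace Xhat] [MetricSpace X]
    [CompactSpace Xhat]
    (π : Xhat → X) (hsurj : Function.Surjective π) (hloc : IsLocalIsometry π)
    (hhat : Xhat ≃ₜ Xhat) (h : X ≃ₜ X)
    (hcomm : π ∘ hhat = h ∘ π) :
    bowenEntropy ⇑hhat = bowenEntropy ⇑h := by
  obtain ⟨δ, hδ, hiso⟩ := hloc.exists_uniform_radius
  have hsc : Function.Semiconj π hhat h := congrFun hcomm
  refine le_antisymm (bowenEntropy_le_of_maxSepCard_le fun ε hε => ?_)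
    (bowenEntropy_le_of_maxSepCard_le fun ε hε => ?_)
  · obtain ⟨N, hN⟩ := exists_card_le_of_pairwise_le_dist (X := Xhat) hδ
    obtain ⟨ρ, hρ, hρδ⟩ := Metric.uniformContinuous_iff.1
      (CompactSpace.uniformContinuous_of_continuous hhat.continuous) δ hδ
    refine ⟨min ε ρ / 2, by positivity, N, fun n => maxSepCard_le_mul_maxSepCard hiso hsc hN hρδ
      (by positivity) ?_ ?_⟩ <;> linarith [min_le_left ε ρ, min_le_right ε ρ]
  · refine ⟨min ε δ, lt_min hε hδ, 1, fun n => ?_⟩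
    rw [Nat.cast_one, one_mul]
    exact (maxSepCard_anti h n (min_le_left ε δ)).trans
      (maxSepCard_le_maxSepCard_of_surjective hiso hsurj hsc (min_le_right ε δ))

/-- If `π : X̂ → X` is a surjective local isometry between
compact metric spaces and `ĥ, h` are homeomorphisms with `π ∘ ĥ = h ∘ π`, then
`h_top(ĥ) = h_top(h)`. -/
theorem entropy_eq_of_localIsometry_semiconj
    {Xhat X : Type*} [MetricSpace Xhat] [MetricSpace X]
    [CompactSpace Xhat] [CompactSpace X]
    (π : Xhat → X) (hsurj : Function.Surjective π) (hloc : IsLocalIsometry π)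
    (hhat : Xhat ≃ₜ Xhat) (h : X ≃ₜ X)
    (hcomm : π ∘ hhat = h ∘ π) :
    bowenEntropy ⇑hhat = bowenEntropy ⇑h :=
  entropy_eq_of_localIsometry_semiconj_general π hsurj hloc hhat h hcomm
end
end
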